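/- arXiv:1904.12103 — 5 statements merged into one kernel-verified Lean document; each statement's English description precedes it below -/
import Mathlib

section
/- Let A and B be real p×r matrices and suppose AᵀB admits a singular value decomposition AᵀB = Q₁ D Q₂ᵀ, where Q₁ and Q₂ are orthogonal r×r matrices and D is a diagonal r×r matrix with nonnegative diagonal entries. Then the orthogonal matrix R₁ = Q₂Q₁ᵀ minimizes the map R ↦ ‖A − B R‖_F² over all orthogonal r×r matrices R; that is, for every orthogonal r×r matrix R, ‖A − B Q₂Q₁ᵀ‖_F² ≤ ‖A − B R‖_F². -/
open Matrix

lemma ortho_diag_le {r : ℕ} (S : Matrix (Fin r) (Fin r) ℝ) (hS : Sᵀ * S = 1)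
    (i : Fin r) : S i i ≤ 1 := by
  have h : (Sᵀ * S) i i = 1 := by rw [hS]; simp
  have h2 : ∑ k, S k i ^ 2 = 1 := by
    rw [← h]; simp [Matrix.mul_apply, transpose_apply, sq]
  have hle : S i i ^ 2 ≤ 1 := by
    rw [← h2]
    exact Finset.single_le_sum (f := fun k => S k i ^ 2) (fun k _ => sq_nonneg _)
      (Finset.mem_univ i)
  nlinarith [sq_nonneg (S i i - 1)]

lemma expand_trace {p r : ℕ} (A B : Matrix (Fin p) (Fin r) ℝ)
    (R : Matrix (Fin r) (Fin r) ℝ) (hR : Rᵀ * R = 1) :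
    Matrix.trace ((A - B * R)ᵀ * (A - B * R)) =
      Matrix.trace (Aᵀ * A) + Matrix.trace (Bᵀ * B)
        - 2 * Matrix.trace (Aᵀ * B * R) := by
  have hRR : R * Rᵀ = 1 := mul_eq_one_comm.mp hR
  have h1 : Matrix.trace (Rᵀ * Bᵀ * A) = Matrix.trace (Aᵀ * B * R) := by
    rw [← Matrix.trace_transpose (Aᵀ * B * R)]
    simp [Matrix.mul_assoc]
  have h2 : Matrix.trace (Rᵀ * (Bᵀ * B) * R) = Matrix.trace (Bᵀ * B) := by
    rw [Matrix.trace_mul_cycle, ← Matrix.mul_assoc, hRR, Matrix.one_mul]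
  calc Matrix.trace ((A - B * R)ᵀ * (A - B * R))
      = Matrix.trace (Aᵀ * A) - Matrix.trace (Aᵀ * B * R)
        - Matrix.trace (Rᵀ * Bᵀ * A) + Matrix.trace (Rᵀ * (Bᵀ * B) * R) := by
        simp only [Matrix.transpose_sub, Matrix.transpose_mul, Matrix.sub_mul,
          Matrix.mul_sub, Matrix.trace_sub, Matrix.trace_add, Matrix.mul_assoc]
        ring
    _ = _ := by rw [h1, h2]; ring

/-- The orthogonal Procrustes problem: if `AᵀB = Q₁ D Q₂ᵀ` is a singular value
decomposition (with `Q₁`, `Q₂` orthogonal and `D` diagonal with nonnegative entries),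
then `R₁ = Q₂ Q₁ᵀ` minimizes `R ↦ ‖A − B R‖_F²` over orthogonal matrices `R`. -/
theorem procrustes_minimizer {p r : ℕ} (A B : Matrix (Fin p) (Fin r) ℝ)
    (Q₁ Q₂ D : Matrix (Fin r) (Fin r) ℝ)
    (hQ₁ : Q₁ᵀ * Q₁ = 1) (hQ₂ : Q₂ᵀ * Q₂ = 1)
    (hDdiag : ∀ i j, i ≠ j → D i j = 0) (hDnonneg : ∀ i, 0 ≤ D i i)
    (hSVD : Aᵀ * B = Q₁ * D * Q₂ᵀ) :
    ∀ R : Matrix (Fin r) (Fin r) ℝ, Rᵀ * R = 1 →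
      Matrix.trace ((A - B * (Q₂ * Q₁ᵀ))ᵀ * (A - B * (Q₂ * Q₁ᵀ))) ≤
        Matrix.trace ((A - B * R)ᵀ * (A - B * R)) := by
  intro R hR
  have hQ₁Q₁ : Q₁ * Q₁ᵀ = 1 := mul_eq_one_comm.mp hQ₁
  have hQ₂Q₂ : Q₂ * Q₂ᵀ = 1 := mul_eq_one_comm.mp hQ₂
  have hR1 : (Q₂ * Q₁ᵀ)ᵀ * (Q₂ * Q₁ᵀ) = 1 := by
    calc (Q₂ * Q₁ᵀ)ᵀ * (Q₂ * Q₁ᵀ) = Q₁ * ((Q₂ᵀ * Q₂) * Q₁ᵀ) := by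
          simp [Matrix.mul_assoc]
      _ = 1 := by rw [hQ₂, Matrix.one_mul, hQ₁Q₁]
  rw [expand_trace A B R hR, expand_trace A B _ hR1]
  have key : Matrix.trace (Aᵀ * B * R) ≤ Matrix.trace (Aᵀ * B * (Q₂ * Q₁ᵀ)) := by
    have h1 : Aᵀ * B * (Q₂ * Q₁ᵀ) = Q₁ * D * Q₁ᵀ := by
      rw [hSVD]
      calc Q₁ * D * Q₂ᵀ * (Q₂ * Q₁ᵀ) = Q₁ * D * (Q₂ᵀ * Q₂) * Q₁ᵀ := by
            simp [Matrix.mul_assoc]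
        _ = Q₁ * D * Q₁ᵀ := by rw [hQ₂, Matrix.mul_one]
    have htr1 : Matrix.trace (Aᵀ * B * (Q₂ * Q₁ᵀ)) = Matrix.trace D := by
      rw [h1, Matrix.trace_mul_cycle, hQ₁, Matrix.one_mul]
    set S := Q₂ᵀ * R * Q₁ with hSdef
    have hSorth : Sᵀ * S = 1 := by
      calc Sᵀ * S = Q₁ᵀ * ((Rᵀ * (Q₂ * Q₂ᵀ)) * (R * Q₁)) := by
            simp [hSdef, Matrix.mul_assoc]
        _ = 1 := by
            rw [hQ₂Q₂, Matrix.mul_one,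
              show Rᵀ * (R * Q₁) = Q₁ from by
                rw [← Matrix.mul_assoc, hR, Matrix.one_mul], hQ₁]
    have htr2 : Matrix.trace (Aᵀ * B * R) = Matrix.trace (D * S) := by
      rw [hSVD, hSdef,
        show Q₁ * D * Q₂ᵀ * R = (Q₁ * D) * (Q₂ᵀ * R) from by simp [Matrix.mul_assoc],
        Matrix.trace_mul_comm,
        show Q₂ᵀ * R * (Q₁ * D) = (Q₂ᵀ * R * Q₁) * D from by simp [Matrix.mul_assoc],
        Matrix.trace_mul_comm]
    rw [htr1, htr2]
    have hDS : Matrix.trace (D * S) = ∑ i, D i i * S i i := by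
      simp only [Matrix.trace, Matrix.diag, Matrix.mul_apply]
      apply Finset.sum_congr rfl
      intro i _
      rw [Finset.sum_eq_single i]
      · intro b _ hb; rw [hDdiag i b (Ne.symm hb), zero_mul]
      · intro h; exact absurd (Finset.mem_univ i) h
    rw [hDS, Matrix.trace]
    apply Finset.sum_le_sum
    intro i _
    calc D i i * S i i ≤ D i i * 1 :=
          mul_le_mul_of_nonneg_left (ortho_diag_le S hSorth i) (hDnonneg i)
      _ = Matrix.diag D i := by simp
  linarith
end

section
/- Let Q₁, Q₂, and R be orthogonal r×r real matrices and let D be a diagonal r×r real matrix with nonnegative diagonal entries. Then trace(Q₁ D Q₂ᵀ R) ≤ trace(D), and equality holds when R = Q₂Q₁ᵀ. -/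
open Matrix

/-- For orthogonal `Q₁`, `Q₂`, `R` and diagonal `D` with nonnegative entries,
`trace(Q₁ D Q₂ᵀ R) ≤ trace D`, with equality when `R = Q₂ Q₁ᵀ`. -/
theorem trace_svd_bound {r : ℕ} (Q₁ Q₂ R D : Matrix (Fin r) (Fin r) ℝ)
    (hQ₁ : Q₁ᵀ * Q₁ = 1) (hQ₂ : Q₂ᵀ * Q₂ = 1) (hR : Rᵀ * R = 1)
    (hDdiag : ∀ i j, i ≠ j → D i j = 0) (hDnonneg : ∀ i, 0 ≤ D i i) :
    Matrix.trace (Q₁ * D * Q₂ᵀ * R) ≤ Matrix.trace D ∧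
      Matrix.trace (Q₁ * D * Q₂ᵀ * (Q₂ * Q₁ᵀ)) = Matrix.trace D := by
  constructor
  · set M := Q₂ᵀ * R * Q₁ with hMdef
    have hM : Mᵀ * M = 1 := by
      have hQ₂' : Q₂ * Q₂ᵀ = 1 := mul_eq_one_comm.mp hQ₂
      calc Mᵀ * M = Q₁ᵀ * (Rᵀ * ((Q₂ * Q₂ᵀ) * (R * Q₁))) := by
            simp [hMdef, Matrix.transpose_mul, Matrix.mul_assoc]
        _ = Q₁ᵀ * ((Rᵀ * R) * Q₁) := by rw [hQ₂']; simp [Matrix.mul_assoc]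
        _ = 1 := by rw [hR]; simpa using hQ₁
    have hMbound : ∀ i, M i i ≤ 1 := by
      intro i
      have h := congrFun (congrFun hM i) i
      simp [Matrix.mul_apply, Matrix.one_apply, Matrix.transpose_apply] at h
      have h2 : (M i i) * (M i i) ≤ 1 := by
        rw [← h]
        exact Finset.single_le_sum (fun j _ => mul_self_nonneg (M j i))
          (Finset.mem_univ i)
      nlinarith
    have htr : Matrix.trace (Q₁ * D * Q₂ᵀ * R) = Matrix.trace (M * D) := by
      rw [hMdef]
      rw [show Q₁ * D * Q₂ᵀ * R = (Q₁ * D) * (Q₂ᵀ * R) from Matrix.mul_assoc _ _ _,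
        Matrix.trace_mul_comm, ← Matrix.mul_assoc]
    rw [htr, Matrix.trace, Matrix.trace]
    apply Finset.sum_le_sum
    intro i _
    have : (M * D) i i = M i i * D i i := by
      rw [Matrix.mul_apply]
      rw [Finset.sum_eq_single i]
      · intro j _ hj; rw [hDdiag j i hj, mul_zero]
      · simp
    rw [Matrix.diag_apply, this, Matrix.diag_apply]
    calc M i i * D i i ≤ 1 * D i i :=
          mul_le_mul_of_nonneg_right (hMbound i) (hDnonneg i)
      _ = D i i := one_mul _
  · have : Q₁ * D * Q₂ᵀ * (Q₂ * Q₁ᵀ) = Q₁ * D * Q₁ᵀ := by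
      rw [Matrix.mul_assoc (Q₁ * D) Q₂ᵀ (Q₂ * Q₁ᵀ),
        ← Matrix.mul_assoc Q₂ᵀ Q₂ Q₁ᵀ, hQ₂, Matrix.one_mul]
    rw [this, Matrix.trace_mul_cycle, hQ₁, Matrix.one_mul]
end

section
/- Let p ≥ r and let Λ₁₁, Λ₁₂, Λ₂₁, Λ₂₂ be real p×r matrices of full column rank r. Let η₁, η₂ : [0,1] → ℝʳ be continuous functions such that η₂ is not constant on any nonempty open subinterval of [0,1] and the set {η₂(t) : t ∈ [0,1]} spans ℝʳ. Let M₁, M₂ : [0,1] → [0,1] be continuous, strictly increasing functions with M₁(0) = M₂(0) = 0 and M₁(1) = M₂(1) = 1. If Λ₁₁ η₁(t) = Λ₁₂ η₂(t) for all t ∈ [0,1] and Λ₂₁ η₁(M₁(t)) = Λ₂₂ η₂(M₂(t)) for all t ∈ [0,1], then M₁(t) = M₂(t) for all t ∈ [0,1]. (That is, the warping function in the time-aligned factor model is identifiable when the shared latent factor curve is continuous and not constant on any interval of time.) -/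
/-!
Cancelling the loadings (they have full column rank) gives a linear map `K` with
`η₂ ∘ M₂ = K ∘ η₂ ∘ M₁` on `[0,1]`; it is invertible because `η₂` spans `ℝʳ`. For the time change
`W = M₂ ∘ M₁⁻¹` this reads `K ∘ η₂ = η₂ ∘ W`, and likewise `K⁻¹ ∘ η₂ = η₂ ∘ W⁻¹`, so the powers of
`K⁻¹` are bounded on the bounded spanning set `η₂ '' [0,1]`, hence uniformly bounded. If
`u < W u`, the `W`-orbits of all points of `[u, W u]` converge to one point, so
`Kⁿ (η₂ s - η₂ t) → 0` and therefore `η₂ s = η₂ t`: `η₂` would be constant on `[u, W u]`.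
Thus `M₂ ≤ M₁`, and `M₁ ≤ M₂` by symmetry.
-/

open Matrix Set Filter Topology

section LinearAlgebra

variable {K : Type*} [Field K]

theorem Matrix.exists_linearMap_eq_of_mulVec_eq {m n n' α : Type*} [Fintype n] [Fintype n']
    {Λ : Matrix m n K} {Λ' : Matrix m n' K} (hΛ : LinearIndependent K Λᵀ)
    {f : α → n → K} {g : α → n' → K} {s : Set α} (h : ∀ x ∈ s, Λ *ᵥ f x = Λ' *ᵥ g x) :
    ∃ L : (n' → K) →ₗ[K] (n → K), ∀ x ∈ s, f x = L (g x) := by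
  have hinj : Function.Injective Λ.mulVecLin := Matrix.mulVec_injective_iff.2 hΛ
  obtain ⟨P, hP⟩ := Λ.mulVecLin.exists_leftInverse_of_injective (LinearMap.ker_eq_bot.2 hinj)
  refine ⟨P ∘ₗ Λ'.mulVecLin, fun x hx => ?_⟩
  simpa [← h x hx] using (LinearMap.congr_fun hP (f x)).symm

theorem LinearMap.exists_equiv_eq_of_span_eq_top {E α : Type*} [AddCommGroup E] [Module K E]
    [FiniteDimensional K E] {f g : α → E} {s : Set α} (L : E →ₗ[K] E)
    (hspan : Submodule.span K (f '' s) = ⊤) (h : ∀ x ∈ s, f x = L (g x)) :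
    ∃ e : E ≃ₗ[K] E, ∀ x ∈ s, f x = e (g x) := by
  have hsurj : Function.Surjective L := by
    rw [← LinearMap.range_eq_top, eq_top_iff, ← hspan, Submodule.span_le]
    rintro _ ⟨x, hx, rfl⟩
    exact ⟨g x, (h x hx).symm⟩
  exact ⟨LinearEquiv.ofBijective L ⟨L.injective_iff_surjective.2 hsurj, hsurj⟩, h⟩

end LinearAlgebra

section PowerBounds

variable {𝕜 E α : Type*} [NontriviallyNormedField 𝕜] [NormedAddCommGroup E] [NormedSpace 𝕜 E]

theorem ContinuousLinearMap.pow_apply_eq_of_mapsTo {η : α → E} {W : α → α} {s : Set α}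
    {A : E →L[𝕜] E} (hW : MapsTo W s s) (hA : ∀ x ∈ s, A (η x) = η (W x)) (n : ℕ) :
    ∀ x ∈ s, (A ^ n) (η x) = η (W^[n] x) := by
  induction n with
  | zero => simp
  | succ n ih =>
    intro x hx
    rw [pow_succ, Function.iterate_succ_apply, mul_apply_eq_comp, hA x hx]
    exact ih (W x) (hW hx)

/-- The orbit of every `η x` is bounded, and these vectors span `E`, so Banach–Steinhaus applies. -/
theorem ContinuousLinearMap.exists_norm_pow_le_of_mapsTo [CompleteSpace E] {η : α → E}
    {W : α → α} {s : Set α} {A : E →L[𝕜] E} (hbdd : Bornology.IsBounded (η '' s))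
    (hspan : Submodule.span 𝕜 (η '' s) = ⊤) (hW : MapsTo W s s)
    (hA : ∀ x ∈ s, A (η x) = η (W x)) :
    ∃ C, ∀ n : ℕ, ‖A ^ n‖ ≤ C := by
  obtain ⟨R, hR⟩ := isBounded_iff_forall_norm_le.1 hbdd
  refine banach_steinhaus fun v => ?_
  induction (hspan ▸ Submodule.mem_top : v ∈ Submodule.span 𝕜 (η '' s))
    using Submodule.span_induction with
  | mem _ hv =>
    obtain ⟨x, hx, rfl⟩ := hv
    refine ⟨R, fun n => ?_⟩
    rw [pow_apply_eq_of_mapsTo hW hA n x hx]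
    exact hR _ (mem_image_of_mem η (hW.iterate n hx))
  | zero => exact ⟨0, by simp⟩
  | add v w _ _ hv hw =>
    obtain ⟨Cv, hCv⟩ := hv
    obtain ⟨Cw, hCw⟩ := hw
    exact ⟨Cv + Cw, fun n => by rw [map_add]; exact norm_add_le_of_le (hCv n) (hCw n)⟩
  | smul c v _ hv =>
    obtain ⟨Cv, hCv⟩ := hv
    refine ⟨‖c‖ * Cv, fun n => ?_⟩
    rw [map_smul, norm_smul]
    exact mul_le_mul_of_nonneg_left (hCv n) (norm_nonneg c)

theorem ContinuousLinearMap.eq_zero_of_tendsto_pow_apply {A B : E →L[𝕜] E} (hBA : B * A = 1)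
    {C : ℝ} (hB : ∀ n : ℕ, ‖B ^ n‖ ≤ C) {v : E}
    (hv : Tendsto (fun n => (A ^ n) v) atTop (𝓝 0)) : v = 0 := by
  have hle : ∀ n : ℕ, ‖v‖ ≤ C * ‖(A ^ n) v‖ := fun n =>
    calc ‖v‖ = ‖(B ^ n) ((A ^ n) v)‖ := by
          rw [← mul_apply_eq_comp, pow_mul_pow_eq_one n hBA, one_apply_eq_self]
      _ ≤ ‖B ^ n‖ * ‖(A ^ n) v‖ := (B ^ n).le_opNorm _
      _ ≤ C * ‖(A ^ n) v‖ := mul_le_mul_of_nonneg_right (hB n) (norm_nonneg _)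
  have hlim : Tendsto (fun n => C * ‖(A ^ n) v‖) atTop (𝓝 0) := by
    simpa using hv.norm.const_mul C
  exact norm_le_zero_iff.1 (ge_of_tendsto' hlim hle)

end PowerBounds

section Orbits

variable {W : ℝ → ℝ} {a b : ℝ}

theorem MonotoneOn.iterate_of_mapsTo (hW : MonotoneOn W (Icc a b))
    (hWmaps : MapsTo W (Icc a b) (Icc a b)) (n : ℕ) : MonotoneOn W^[n] (Icc a b) := by
  induction n with
  | zero => exact monotoneOn_id
  | succ n ih =>
    intro x hx y hy hxy
    rw [Function.iterate_succ_apply, Function.iterate_succ_apply]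
    exact ih (hWmaps hx) (hWmaps hy) (hW hx hy hxy)

/-- Every `W^[n] s` with `s ∈ [u, W u]` is squeezed between `W^[n] u` and `W^[n+1] u`, which
have the same limit. -/
theorem exists_tendsto_iterate_of_le_apply (hW : MonotoneOn W (Icc a b))
    (hWmaps : MapsTo W (Icc a b) (Icc a b)) {u : ℝ} (hu : u ∈ Icc a b) (huW : u ≤ W u) :
    ∃ c ∈ Icc a b, ∀ s ∈ Icc u (W u), Tendsto (fun n => W^[n] s) atTop (𝓝 c) := by
  have hiter := hW.iterate_of_mapsTo hWmaps
  have horbit_mem : ∀ n, W^[n] u ∈ Icc a b := fun n => hWmaps.iterate n hu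
  have hmono : Monotone fun n => W^[n] u := monotone_nat_of_le_succ fun n => by
    rw [Function.iterate_succ_apply]
    exact hiter n hu (hWmaps hu) huW
  have hbdd : BddAbove (range fun n => W^[n] u) := ⟨b, by
    rintro _ ⟨n, rfl⟩
    exact (horbit_mem n).2⟩
  have hlim := tendsto_atTop_ciSup hmono hbdd
  have hlim_succ : Tendsto (fun n => W^[n] (W u)) atTop (𝓝 (⨆ n, W^[n] u)) := by
    simpa only [Function.comp_def, ← Function.iterate_succ_apply] using
      hlim.comp (tendsto_add_atTop_nat 1)
  have hsub : Icc u (W u) ⊆ Icc a b := Icc_subset_Icc hu.1 (hWmaps hu).2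
  refine ⟨_, isClosed_Icc.mem_of_tendsto hlim (Eventually.of_forall horbit_mem),
    fun s hs => tendsto_of_tendsto_of_tendsto_of_le_of_le hlim hlim_succ
      (fun n => hiter n hu (hsub hs) hs.1) (fun n => hiter n (hsub hs) (hWmaps hu) hs.2)⟩

end Orbits

theorem eqOn_Icc_of_pow_apply_eq {𝕜 E : Type*} [NontriviallyNormedField 𝕜] [NormedAddCommGroup E]
    [NormedSpace 𝕜 E] {η : ℝ → E} {W : ℝ → ℝ} {a b : ℝ} (hη : ContinuousOn η (Icc a b))
    (hW : MonotoneOn W (Icc a b)) (hWmaps : MapsTo W (Icc a b) (Icc a b))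
    {A B : E →L[𝕜] E} (hBA : B * A = 1) {C : ℝ} (hB : ∀ n : ℕ, ‖B ^ n‖ ≤ C)
    (hA : ∀ x ∈ Icc a b, A (η x) = η (W x)) {u : ℝ} (hu : u ∈ Icc a b) (huW : u ≤ W u) :
    ∀ s ∈ Icc u (W u), η s = η u := by
  have hsub : Icc u (W u) ⊆ Icc a b := Icc_subset_Icc hu.1 (hWmaps hu).2
  obtain ⟨c, hc, horbit⟩ := exists_tendsto_iterate_of_le_apply hW hWmaps hu huW
  have hη_orbit : ∀ s ∈ Icc u (W u), Tendsto (fun n => η (W^[n] s)) atTop (𝓝 (η c)) :=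
    fun s hs => (hη c hc).tendsto.comp <| tendsto_nhdsWithin_iff.2
      ⟨horbit s hs, Eventually.of_forall fun n => hWmaps.iterate n (hsub hs)⟩
  intro s hs
  refine sub_eq_zero.1 (ContinuousLinearMap.eq_zero_of_tendsto_pow_apply hBA hB ?_)
  simp_rw [map_sub, ContinuousLinearMap.pow_apply_eq_of_mapsTo hWmaps hA _ s (hsub hs),
    ContinuousLinearMap.pow_apply_eq_of_mapsTo hWmaps hA _ u hu]
  simpa using (hη_orbit s hs).sub (hη_orbit u ⟨le_rfl, huW⟩)

theorem StrictMonoOn.exists_comp_eq_of_surjOn {α β : Type*} [LinearOrder α] [Preorder β]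
    [Nonempty α] {M M' : α → β} {s : Set α} {t : Set β} (hM : StrictMonoOn M s)
    (hMs : SurjOn M s t) (hM' : MonotoneOn M' s) (hM'maps : MapsTo M' s t) :
    ∃ W : β → β, MonotoneOn W t ∧ MapsTo W t t ∧ ∀ x ∈ s, W (M x) = M' x := by
  have hinv_mem : MapsTo (Function.invFunOn M s) t s := hMs.mapsTo_invFunOn
  have hinv_eq : ∀ y ∈ t, M (Function.invFunOn M s y) = y := fun y hy => hMs.rightInvOn_invFunOn hy
  refine ⟨M' ∘ Function.invFunOn M s, fun y hy z hz hyz => hM' (hinv_mem hy) (hinv_mem hz) ?_,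
    hM'maps.comp hinv_mem, fun x hx => ?_⟩
  · rwa [← hM.le_iff_le (hinv_mem hy) (hinv_mem hz), hinv_eq y hy, hinv_eq z hz]
  · simp only [Function.comp_apply, hM.injOn.leftInvOn_invFunOn hx]

theorem exists_semiconj_of_eq_comp {E : Type*} {η : ℝ → E} {T : E → E} {M M' : ℝ → ℝ}
    (hM : StrictMonoOn M (Icc 0 1)) (hMs : SurjOn M (Icc 0 1) (Icc 0 1))
    (hM' : MonotoneOn M' (Icc 0 1)) (hM'maps : MapsTo M' (Icc 0 1) (Icc 0 1))
    (h : ∀ x ∈ Icc (0 : ℝ) 1, η (M' x) = T (η (M x))) :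
    ∃ W : ℝ → ℝ, MonotoneOn W (Icc 0 1) ∧ MapsTo W (Icc 0 1) (Icc 0 1) ∧
      (∀ x ∈ Icc (0 : ℝ) 1, W (M x) = M' x) ∧ ∀ y ∈ Icc (0 : ℝ) 1, T (η y) = η (W y) := by
  obtain ⟨W, hW, hWmaps, hWM⟩ := hM.exists_comp_eq_of_surjOn hMs hM' hM'maps
  refine ⟨W, hW, hWmaps, hWM, fun y hy => ?_⟩
  obtain ⟨x, hx, rfl⟩ := hMs hy
  rw [hWM x hx, h x hx]

theorem le_of_eq_equiv_comp {E : Type*} [NormedAddCommGroup E] [NormedSpace ℝ E]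
    [CompleteSpace E] {η : ℝ → E} (hηc : ContinuousOn η (Icc 0 1))
    (hηnc : ∀ a b : ℝ, 0 ≤ a → a < b → b ≤ 1 → ∃ s ∈ Ioo a b, ∃ t ∈ Ioo a b, η s ≠ η t)
    (hspan : Submodule.span ℝ (η '' Icc 0 1) = ⊤) {M₁ M₂ : ℝ → ℝ}
    (hM₁m : StrictMonoOn M₁ (Icc 0 1)) (hM₂m : StrictMonoOn M₂ (Icc 0 1))
    (hM₁s : SurjOn M₁ (Icc 0 1) (Icc 0 1)) (hM₂s : SurjOn M₂ (Icc 0 1) (Icc 0 1))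
    (hM₁maps : MapsTo M₁ (Icc 0 1) (Icc 0 1)) (hM₂maps : MapsTo M₂ (Icc 0 1) (Icc 0 1))
    (e : E ≃L[ℝ] E) (he : ∀ x ∈ Icc (0 : ℝ) 1, η (M₂ x) = e (η (M₁ x))) :
    ∀ x ∈ Icc (0 : ℝ) 1, M₂ x ≤ M₁ x := by
  obtain ⟨W, hW, hWmaps, hWM, hA⟩ :=
    exists_semiconj_of_eq_comp hM₁m hM₁s hM₂m.monotoneOn hM₂maps he
  obtain ⟨V, -, hVmaps, -, hB⟩ :=
    exists_semiconj_of_eq_comp (T := ((e.symm : E →L[ℝ] E) : E → E)) hM₂m hM₂s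
      hM₁m.monotoneOn hM₁maps fun x hx => e.eq_symm_apply.2 (he x hx).symm
  obtain ⟨C, hC⟩ := ContinuousLinearMap.exists_norm_pow_le_of_mapsTo
    (isCompact_Icc.image_of_continuousOn hηc).isBounded hspan hVmaps hB
  have hBA : (e.symm : E →L[ℝ] E) * e = 1 := by ext; simp
  have hW_le : ∀ y ∈ Icc (0 : ℝ) 1, W y ≤ y := by
    intro y hy
    by_contra! hlt
    have hconst := eqOn_Icc_of_pow_apply_eq hηc hW hWmaps hBA hC hA hy hlt.le
    obtain ⟨s, hs, t, ht, hne⟩ := hηnc y (W y) hy.1 hlt (hWmaps hy).2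
    exact hne ((hconst s (Ioo_subset_Icc_self hs)).trans (hconst t (Ioo_subset_Icc_self ht)).symm)
  intro x hx
  simpa only [hWM x hx] using hW_le (M₁ x) (hM₁maps hx)

theorem warping_identifiable_general {p r : ℕ}
    (Λ₁₁ Λ₁₂ Λ₂₁ Λ₂₂ : Matrix (Fin p) (Fin r) ℝ)
    (hΛ₁₁ : LinearIndependent ℝ Λ₁₁ᵀ)
    (hΛ₂₂ : LinearIndependent ℝ Λ₂₂ᵀ)
    (η₁ η₂ : ℝ → Fin r → ℝ)
    (hη₂c : ContinuousOn η₂ (Set.Icc 0 1))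
    (hη₂nc : ∀ a b : ℝ, 0 ≤ a → a < b → b ≤ 1 →
      ∃ s ∈ Set.Ioo a b, ∃ t ∈ Set.Ioo a b, η₂ s ≠ η₂ t)
    (hspan : Submodule.span ℝ (η₂ '' Set.Icc 0 1) = ⊤)
    (M₁ M₂ : ℝ → ℝ)
    (hM₁c : ContinuousOn M₁ (Set.Icc 0 1)) (hM₂c : ContinuousOn M₂ (Set.Icc 0 1))
    (hM₁m : StrictMonoOn M₁ (Set.Icc 0 1)) (hM₂m : StrictMonoOn M₂ (Set.Icc 0 1))
    (hM₁maps : Set.MapsTo M₁ (Set.Icc 0 1) (Set.Icc 0 1))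
    (hM₂maps : Set.MapsTo M₂ (Set.Icc 0 1) (Set.Icc 0 1))
    (hM₁0 : M₁ 0 = 0) (hM₂0 : M₂ 0 = 0) (hM₁1 : M₁ 1 = 1) (hM₂1 : M₂ 1 = 1)
    (heq1 : ∀ t ∈ Set.Icc (0:ℝ) 1, Λ₁₁.mulVec (η₁ t) = Λ₁₂.mulVec (η₂ t))
    (heq2 : ∀ t ∈ Set.Icc (0:ℝ) 1,
      Λ₂₁.mulVec (η₁ (M₁ t)) = Λ₂₂.mulVec (η₂ (M₂ t))) :
    ∀ t ∈ Set.Icc (0:ℝ) 1, M₁ t = M₂ t := by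
  have hM₁s : SurjOn M₁ (Icc 0 1) (Icc 0 1) := by
    simpa only [SurjOn, hM₁0, hM₁1] using intermediate_value_Icc zero_le_one hM₁c
  have hM₂s : SurjOn M₂ (Icc 0 1) (Icc 0 1) := by
    simpa only [SurjOn, hM₂0, hM₂1] using intermediate_value_Icc zero_le_one hM₂c
  obtain ⟨L₁, hL₁⟩ := Matrix.exists_linearMap_eq_of_mulVec_eq hΛ₁₁ heq1
  obtain ⟨L₂, hL₂⟩ := Matrix.exists_linearMap_eq_of_mulVec_eq (f := η₂ ∘ M₂) (g := η₁ ∘ M₁) hΛ₂₂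
    fun t ht => (heq2 t ht).symm
  have hspan₂ : Submodule.span ℝ ((η₂ ∘ M₂) '' Icc 0 1) = ⊤ := by
    rwa [image_comp, hM₂s.image_eq_of_mapsTo hM₂maps]
  obtain ⟨e, he⟩ := (L₂ ∘ₗ L₁).exists_equiv_eq_of_span_eq_top (g := η₂ ∘ M₁) hspan₂
    fun t ht => (hL₂ t ht).trans (congrArg L₂ (hL₁ (M₁ t) (hM₁maps ht)))
  let e' := e.toContinuousLinearEquiv
  intro t ht
  exact le_antisymm
    (le_of_eq_equiv_comp hη₂c hη₂nc hspan hM₂m hM₁m hM₂s hM₁s hM₂maps hM₁maps e'.symm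
      (fun x hx => e'.eq_symm_apply.2 (he x hx).symm) t ht)
    (le_of_eq_equiv_comp hη₂c hη₂nc hspan hM₁m hM₂m hM₁s hM₂s hM₁maps hM₂maps e' he t ht)

/-- Identifiability of the warping function in the time-aligned factor model:
if two factorizations with full-column-rank loading matrices, continuous shared
factor curves (with `η₂` nowhere locally constant and spanning `ℝʳ`), and warping
functions `M₁`, `M₂` induce the same means, then `M₁ = M₂` on `[0,1]`. -/
theorem warping_identifiable {p r : ℕ} (hpr : r ≤ p)
    (Λ₁₁ Λ₁₂ Λ₂₁ Λ₂₂ : Matrix (Fin p) (Fin r) ℝ)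
    (hΛ₁₁ : LinearIndependent ℝ Λ₁₁ᵀ) (hΛ₁₂ : LinearIndependent ℝ Λ₁₂ᵀ)
    (hΛ₂₁ : LinearIndependent ℝ Λ₂₁ᵀ) (hΛ₂₂ : LinearIndependent ℝ Λ₂₂ᵀ)
    (η₁ η₂ : ℝ → Fin r → ℝ)
    (hη₁c : ContinuousOn η₁ (Set.Icc 0 1)) (hη₂c : ContinuousOn η₂ (Set.Icc 0 1))
    (hη₂nc : ∀ a b : ℝ, 0 ≤ a → a < b → b ≤ 1 →
      ∃ s ∈ Set.Ioo a b, ∃ t ∈ Set.Ioo a b, η₂ s ≠ η₂ t)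
    (hspan : Submodule.span ℝ (η₂ '' Set.Icc 0 1) = ⊤)
    (M₁ M₂ : ℝ → ℝ)
    (hM₁c : ContinuousOn M₁ (Set.Icc 0 1)) (hM₂c : ContinuousOn M₂ (Set.Icc 0 1))
    (hM₁m : StrictMonoOn M₁ (Set.Icc 0 1)) (hM₂m : StrictMonoOn M₂ (Set.Icc 0 1))
    (hM₁maps : Set.MapsTo M₁ (Set.Icc 0 1) (Set.Icc 0 1))
    (hM₂maps : Set.MapsTo M₂ (Set.Icc 0 1) (Set.Icc 0 1))
    (hM₁0 : M₁ 0 = 0) (hM₂0 : M₂ 0 = 0) (hM₁1 : M₁ 1 = 1) (hM₂1 : M₂ 1 = 1)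
    (heq1 : ∀ t ∈ Set.Icc (0:ℝ) 1, Λ₁₁.mulVec (η₁ t) = Λ₁₂.mulVec (η₂ t))
    (heq2 : ∀ t ∈ Set.Icc (0:ℝ) 1,
      Λ₂₁.mulVec (η₁ (M₁ t)) = Λ₂₂.mulVec (η₂ (M₂ t))) :
    ∀ t ∈ Set.Icc (0:ℝ) 1, M₁ t = M₂ t :=
  warping_identifiable_general Λ₁₁ Λ₁₂ Λ₂₁ Λ₂₂ hΛ₁₁ hΛ₂₂ η₁ η₂ hη₂c hη₂nc hspan M₁ M₂ hM₁c hM₂c hM₁m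
    hM₂m hM₁maps hM₂maps hM₁0 hM₂0 hM₁1 hM₂1 heq1 heq2
end

section
/- Let Λ₁ and Λ₂ be real p×r matrices of full column rank r, and let η₁, η₂ : [0,1] → ℝʳ be functions such that Λ₁ η₁(t) = Λ₂ η₂(t) for all t ∈ [0,1] and the set {η₂(t) : t ∈ [0,1]} spans ℝʳ. Then there exists an invertible r×r matrix P such that Λ₁ = Λ₂ P and η₁(t) = P⁻¹ η₂(t) for all t ∈ [0,1]. -/
/-!
The vectors `Λ₂ η₂(t) = Λ₁ η₁(t)` span the range of `Λ₂`, so `range Λ₂ ≤ range Λ₁`; since `Λ₂`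
is injective its range already has the largest possible dimension `r`, hence the two ranges
agree and `Λ₁ = Λ₂ P` for some `P`. Cancelling `Λ₂` gives `P η₁(t) = η₂(t)`, so the range of
`P` contains the spanning set `{η₂(t)}` and `P` is invertible.
-/

open Matrix

namespace LinearMap

variable {R K U V W ι : Type*}

theorem range_le_range_of_span_image_eq_top [Semiring R] [AddCommMonoid U] [AddCommMonoid V]
    [AddCommMonoid W] [Module R U] [Module R V] [Module R W] {f : U →ₗ[R] W} {g : V →ₗ[R] W}
    {u : ι → U} {v : ι → V} {s : Set ι} (hspan : Submodule.span R (v '' s) = ⊤)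
    (h : ∀ i ∈ s, f (u i) = g (v i)) : range g ≤ range f := by
  rw [← Submodule.map_top, ← hspan, Submodule.map_span, Submodule.span_le]
  rintro _ ⟨_, ⟨i, hi, rfl⟩, rfl⟩
  exact ⟨u i, h i hi⟩

theorem range_eq_of_le_of_injective [Field K] [AddCommGroup U] [AddCommGroup V] [AddCommGroup W]
    [Module K U] [Module K V] [Module K W] [FiniteDimensional K U] {f : U →ₗ[K] W}
    {g : V →ₗ[K] W} (hg : Function.Injective g) (hdim : Module.finrank K U ≤ Module.finrank K V)
    (h : range g ≤ range f) : range g = range f :=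
  Submodule.eq_of_le_of_finrank_le h <| by
    rw [finrank_range_of_inj hg]; exact f.finrank_range_le.trans hdim

end LinearMap

namespace Matrix

variable {R l m n : Type*} [CommRing R] [Fintype m] [Fintype n] [DecidableEq m] [DecidableEq n]

theorem exists_eq_mul_of_range_mulVecLin_le {A : Matrix l n R} {B : Matrix l m R}
    (h : LinearMap.range A.mulVecLin ≤ LinearMap.range B.mulVecLin) :
    ∃ P : Matrix m n R, A = B * P := by
  obtain ⟨q, hq⟩ := Module.projective_lifting_property B.mulVecLin.rangeRestrict
    (A.mulVecLin.codRestrict _ fun x => h ⟨x, rfl⟩) B.mulVecLin.surjective_rangeRestrict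
  refine ⟨LinearMap.toMatrix' q, toLin'.injective ?_⟩
  rw [toLin'_mul, toLin'_toMatrix']
  exact LinearMap.ext fun x => (congrArg Subtype.val (LinearMap.congr_fun hq x)).symm

end Matrix

theorem loading_change_of_basis_general {p r : ℕ} (Λ₁ Λ₂ : Matrix (Fin p) (Fin r) ℝ)
    (hΛ₂ : LinearIndependent ℝ Λ₂ᵀ)
    (η₁ η₂ : ℝ → Fin r → ℝ)
    (heq : ∀ t ∈ Set.Icc (0:ℝ) 1, Λ₁.mulVec (η₁ t) = Λ₂.mulVec (η₂ t))
    (hspan : Submodule.span ℝ (η₂ '' Set.Icc 0 1) = ⊤) :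
    ∃ P : Matrix (Fin r) (Fin r) ℝ, IsUnit P ∧ Λ₁ = Λ₂ * P ∧
      ∀ t ∈ Set.Icc (0:ℝ) 1, η₁ t = P⁻¹.mulVec (η₂ t) := by
  have hinj : Function.Injective Λ₂.mulVec := mulVec_injective_iff.mpr hΛ₂
  have hrange : LinearMap.range Λ₂.mulVecLin = LinearMap.range Λ₁.mulVecLin :=
    LinearMap.range_eq_of_le_of_injective hinj le_rfl
      (LinearMap.range_le_range_of_span_image_eq_top hspan heq)
  obtain ⟨P, hP⟩ := exists_eq_mul_of_range_mulVecLin_le hrange.ge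
  have hPη : ∀ t ∈ Set.Icc (0:ℝ) 1, P *ᵥ η₁ t = η₂ t := fun t ht =>
    hinj (by rw [mulVec_mulVec, ← hP, heq t ht])
  have hsurj : LinearMap.range P.mulVecLin = ⊤ := top_le_iff.mp <| by
    rw [← LinearMap.range_id]
    exact LinearMap.range_le_range_of_span_image_eq_top hspan hPη
  have hPunit : IsUnit P := mulVec_surjective_iff_isUnit.mp (LinearMap.range_eq_top.mp hsurj)
  refine ⟨P, hPunit, hP, fun t ht => ?_⟩
  rw [← hPη t ht, mulVec_mulVec, nonsing_inv_mul P ((isUnit_iff_isUnit_det P).mp hPunit),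
    one_mulVec]

/-- If `Λ₁ η₁(t) = Λ₂ η₂(t)` for all `t ∈ [0,1]` with `Λ₁`, `Λ₂` of full column rank
and `{η₂(t)}` spanning `ℝʳ`, then `Λ₁ = Λ₂ P` and `η₁ = P⁻¹ η₂` for some invertible `P`. -/
theorem loading_change_of_basis {p r : ℕ} (Λ₁ Λ₂ : Matrix (Fin p) (Fin r) ℝ)
    (hΛ₁ : LinearIndependent ℝ Λ₁ᵀ) (hΛ₂ : LinearIndependent ℝ Λ₂ᵀ)
    (η₁ η₂ : ℝ → Fin r → ℝ)
    (heq : ∀ t ∈ Set.Icc (0:ℝ) 1, Λ₁.mulVec (η₁ t) = Λ₂.mulVec (η₂ t))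
    (hspan : Submodule.span ℝ (η₂ '' Set.Icc 0 1) = ⊤) :
    ∃ P : Matrix (Fin r) (Fin r) ℝ, IsUnit P ∧ Λ₁ = Λ₂ * P ∧
      ∀ t ∈ Set.Icc (0:ℝ) 1, η₁ t = P⁻¹.mulVec (η₂ t) :=
  loading_change_of_basis_general Λ₁ Λ₂ hΛ₂ η₁ η₂ heq hspan
end

section
/- Let Λ be a real p×r matrix such that ΛᵀΛ is invertible. Fix a column index j, write Λ_j ∈ ℝᵖ for the j-th column of Λ and Λ_{−j} for the p×(r−1) matrix obtained by deleting the j-th column, and assume Λ_{−j}ᵀΛ_{−j} is invertible. Define P₁ = Λ_{−j}(Λ_{−j}ᵀΛ_{−j})⁻¹Λ_{−j}ᵀ and P₂ = Λ_j (Λ_jᵀ(I − P₁)Λ_j)⁻¹ Λ_jᵀ (noting that the scalar Λ_jᵀ(I − P₁)Λ_j is nonzero). Then I − Λ(ΛᵀΛ)⁻¹Λᵀ = (I − P₁)(I − P₂)(I − P₁). -/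
open Matrix

private lemma mul_vecMulVec' {a b c : Type*} [Fintype b] (M : Matrix a b ℝ)
    (u : b → ℝ) (v : c → ℝ) : M * vecMulVec u v = vecMulVec (M.mulVec u) v := by
  ext i k
  simp only [Matrix.mul_apply, vecMulVec_apply, Matrix.mulVec, dotProduct,
    Finset.sum_mul, mul_assoc]

private lemma vecMulVec_mulVec' {a b : Type*} [Fintype b] (u : a → ℝ)
    (v w : b → ℝ) : (vecMulVec u v).mulVec w = (v ⬝ᵥ w) • u := by
  ext i
  simp [Matrix.mulVec, dotProduct, vecMulVec_apply, Finset.mul_sum, mul_assoc,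
    mul_comm, mul_left_comm]

/-- Block decomposition of the orthogonal projection: with `Λ₋ⱼ` the matrix `Λ` with its
`j`-th column `u = Λⱼ` deleted, `P₁ = Λ₋ⱼ(Λ₋ⱼᵀΛ₋ⱼ)⁻¹Λ₋ⱼᵀ` and
`P₂ = u (uᵀ(I−P₁)u)⁻¹ uᵀ`, one has `I − Λ(ΛᵀΛ)⁻¹Λᵀ = (I−P₁)(I−P₂)(I−P₁)`. -/
theorem projection_block_decomposition {p m : ℕ}
    (Λ : Matrix (Fin p) (Fin (m + 1)) ℝ) (j : Fin (m + 1))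
    (h : IsUnit (Λᵀ * Λ))
    (Λmj : Matrix (Fin p) (Fin m) ℝ) (hΛmj : ∀ i k, Λmj i k = Λ i (j.succAbove k))
    (hmj : IsUnit (Λmjᵀ * Λmj))
    (u : Fin p → ℝ) (hu : u = fun i => Λ i j)
    (P₁ : Matrix (Fin p) (Fin p) ℝ) (hP₁ : P₁ = Λmj * (Λmjᵀ * Λmj)⁻¹ * Λmjᵀ)
    (s : ℝ) (hs : s = u ⬝ᵥ (1 - P₁).mulVec u) (hs0 : s ≠ 0)
    (P₂ : Matrix (Fin p) (Fin p) ℝ) (hP₂ : P₂ = s⁻¹ • vecMulVec u u) :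
    1 - Λ * (Λᵀ * Λ)⁻¹ * Λᵀ = (1 - P₁) * (1 - P₂) * (1 - P₁) := by
  classical
  have hAdet : IsUnit (Λmjᵀ * Λmj).det := (Matrix.isUnit_iff_isUnit_det _).mp hmj
  have hMdet : IsUnit (Λᵀ * Λ).det := (Matrix.isUnit_iff_isUnit_det _).mp h
  have hAinv : (Λmjᵀ * Λmj)⁻¹ * (Λmjᵀ * Λmj) = 1 := Matrix.nonsing_inv_mul _ hAdet
  -- basic facts about P₁
  have hP₁Λmj : P₁ * Λmj = Λmj := by
    rw [hP₁]
    calc Λmj * (Λmjᵀ * Λmj)⁻¹ * Λmjᵀ * Λmj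
        = Λmj * ((Λmjᵀ * Λmj)⁻¹ * (Λmjᵀ * Λmj)) := by
          simp only [Matrix.mul_assoc]
      _ = Λmj := by rw [hAinv, Matrix.mul_one]
  have hP₁sym : P₁ᵀ = P₁ := by
    rw [hP₁]
    simp only [Matrix.transpose_mul, Matrix.transpose_nonsing_inv, Matrix.transpose_transpose,
      Matrix.mul_assoc]
  have hP₁idem : P₁ * P₁ = P₁ := by
    nth_rewrite 2 [hP₁]
    rw [← Matrix.mul_assoc, ← Matrix.mul_assoc, hP₁Λmj, ← hP₁]
  have hQΛmj : (1 - P₁) * Λmj = 0 := by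
    rw [Matrix.sub_mul, hP₁Λmj, Matrix.one_mul, sub_self]
  -- the candidate projection K
  set V : Matrix (Fin p) (Fin p) ℝ := vecMulVec u u with hV
  set K : Matrix (Fin p) (Fin p) ℝ := P₁ + s⁻¹ • ((1 - P₁) * V * (1 - P₁)) with hK
  -- Step 1: RHS = 1 - K
  have hRHS : (1 - P₁) * (1 - P₂) * (1 - P₁) = 1 - K := by
    rw [hP₂, hK]
    simp only [Matrix.mul_sub, Matrix.sub_mul, Matrix.mul_one, Matrix.one_mul,
      Matrix.mul_smul, Matrix.smul_mul, smul_sub, Matrix.mul_assoc, hP₁idem]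
    abel
  -- Step 2: K is symmetric
  have hVsym : Vᵀ = V := by
    ext i k
    simp [hV, vecMulVec_apply, mul_comm]
  have hKsym : Kᵀ = K := by
    rw [hK]
    simp only [Matrix.transpose_add, Matrix.transpose_smul, Matrix.transpose_mul,
      Matrix.transpose_sub, Matrix.transpose_one, hP₁sym, hVsym, Matrix.mul_assoc]
  -- Step 3a: K * Λmj = Λmj
  have hKΛmj : K * Λmj = Λmj := by
    rw [hK, Matrix.add_mul, hP₁Λmj, Matrix.smul_mul, Matrix.mul_assoc _ (1 - P₁) Λmj,
      hQΛmj, Matrix.mul_zero, smul_zero, add_zero]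
  -- Step 3b: K *ᵥ u = u
  have hKu : K.mulVec u = u := by
    rw [hK, Matrix.add_mulVec, Matrix.smul_mulVec, Matrix.mul_assoc,
      ← Matrix.mulVec_mulVec, ← Matrix.mulVec_mulVec, vecMulVec_mulVec', ← hs,
      Matrix.mulVec_smul, smul_smul, inv_mul_cancel₀ hs0, one_smul,
      Matrix.sub_mulVec, Matrix.one_mulVec]
    abel
  -- Step 4: K * Λ = Λ
  have hKΛ : K * Λ = Λ := by
    ext i c
    by_cases hc : c = j
    · subst hc
      have h2 := congrFun hKu i
      simpa [Matrix.mul_apply, Matrix.mulVec, dotProduct, hu] using h2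
    · obtain ⟨t, rfl⟩ := Fin.exists_succAbove_eq hc
      have h2 := congrFun (congrFun hKΛmj i) t
      simpa [Matrix.mul_apply, hΛmj] using h2
  -- Step 5: K = Λ * Y for some Y
  have hKY : ∃ Y : Matrix (Fin (m + 1)) (Fin p) ℝ, K = Λ * Y := by
    set evec : Fin (m + 1) → ℝ := fun c => if c = j then 1 else 0 with hevec
    set S : Matrix (Fin (m + 1)) (Fin m) ℝ :=
      Matrix.of (fun c t => if c = j.succAbove t then (1 : ℝ) else 0) with hSdef
    have hΛS : Λ * S = Λmj := by
      ext i t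
      simp [Matrix.mul_apply, hSdef, hΛmj i t, mul_ite]
    have hΛe : Λ.mulVec evec = u := by
      ext i
      simp [Matrix.mulVec, dotProduct, hevec, hu, mul_ite]
    set w : Fin (m + 1) → ℝ :=
      evec - S.mulVec ((Λmjᵀ * Λmj)⁻¹.mulVec (Λmjᵀ.mulVec u)) with hw
    have hΛw : Λ.mulVec w = (1 - P₁).mulVec u := by
      rw [hw, Matrix.mulVec_sub, hΛe, Matrix.mulVec_mulVec, hΛS,
        Matrix.mulVec_mulVec, Matrix.mulVec_mulVec, ← hP₁,
        Matrix.sub_mulVec, Matrix.one_mulVec]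
    refine ⟨S * ((Λmjᵀ * Λmj)⁻¹ * Λmjᵀ) + s⁻¹ • (vecMulVec w u * (1 - P₁)), ?_⟩
    rw [Matrix.mul_add, Matrix.mul_smul]
    simp only [← Matrix.mul_assoc]
    rw [hΛS, mul_vecMulVec', hΛw, hK, ← mul_vecMulVec', hV, hP₁]
  -- Step 6: conclude
  set P : Matrix (Fin p) (Fin p) ℝ := Λ * (Λᵀ * Λ)⁻¹ * Λᵀ with hPdef
  have hPsym : Pᵀ = P := by
    rw [hPdef]
    simp only [Matrix.transpose_mul, Matrix.transpose_nonsing_inv, Matrix.transpose_transpose,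
      Matrix.mul_assoc]
  have hPΛ : P * Λ = Λ := by
    rw [hPdef]
    calc Λ * (Λᵀ * Λ)⁻¹ * Λᵀ * Λ = Λ * ((Λᵀ * Λ)⁻¹ * (Λᵀ * Λ)) := by
          simp only [Matrix.mul_assoc]
      _ = Λ := by rw [Matrix.nonsing_inv_mul _ hMdet, Matrix.mul_one]
  have hKP : K * P = P := by
    rw [hPdef]
    simp only [← Matrix.mul_assoc]
    rw [hKΛ]
  have hPK : P * K = K := by
    obtain ⟨Y, hY⟩ := hKY
    rw [hY, ← Matrix.mul_assoc, hPΛ]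
  have hKeqP : K = P := by
    have h1 : Kᵀ = (P * K)ᵀ := by rw [hPK]
    rw [Matrix.transpose_mul, hKsym, hPsym] at h1
    rw [h1, hKP]
  rw [hRHS, hKeqP, hPdef]
end
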